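/- arXiv:1905.12989 — 4 statements merged into one kernel-verified Lean document; each statement's English description precedes it below -/
import Mathlib

section
/- Let X = ⋃_{k=1}^K X_k be a finite dataset partitioned into K nonempty classes, with a density function p : X → (0,∞) injective on X, and a metric D_t on X. Define D_t^in as the maximum over classes of the diameter of each class under D_t, and D_t^btw as the minimum D_t-distance between points of distinct classes. Suppose D_t^in < D_t^btw. Define the labeling procedure: first, correctly label the density maximizer of each class; then, processing unlabeled points in order of decreasing p, assign each point x the label of its nearest (in D_t) already-labeled point of strictly higher density. Then every point of X receives the correct label of its class. -/
/-- LAND correctness: with within-class distances strictly smaller than between-class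
distances, correctly labeling each classwise density maximizer and then propagating
labels to each point from its nearest labeled point of strictly higher density
(processing points in order of decreasing density) labels every point correctly. -/
theorem land_correctness {X : Type*} [Fintype X] [MetricSpace X] {K : ℕ}
    (c : X → Fin K) (hsurj : ∀ k : Fin K, ∃ x, c x = k)
    (p : X → ℝ) (hpos : ∀ x, 0 < p x) (hp : Function.Injective p)
    (hsep : ∀ x y x' y', c x = c y → c x' ≠ c y' → dist x y < dist x' y')
    (Y : X → Fin K)
    (hmax : ∀ x, (∀ y, c y = c x → p y ≤ p x) → Y x = c x)
    (hstep : ∀ x, (∃ y, c y = c x ∧ p x < p y) →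
      ∃ z, p x < p z ∧ (∀ z', p x < p z' → dist x z ≤ dist x z') ∧ Y x = Y z) :
    ∀ x, Y x = c x := by
  have key : ∀ n : ℕ, ∀ x : X,
      (Finset.univ.filter (fun y => p x < p y)).card ≤ n → Y x = c x := by
    intro n
    induction n with
    | zero =>
      intro x hcard
      apply hmax
      intro y hy
      by_contra h
      push_neg at h
      have : y ∈ Finset.univ.filter (fun z => p x < p z) := by
        simp [h]
      have := Finset.card_pos.mpr ⟨y, this⟩
      omega
    | succ n ih =>
      intro x hcard
      by_cases hmx : ∀ y, c y = c x → p y ≤ p x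
      · exact hmax x hmx
      · push_neg at hmx
        obtain ⟨y, hy, hpy⟩ := hmx
        obtain ⟨z, hpz, hmin, hYz⟩ := hstep x ⟨y, hy, hpy⟩
        · have hcz : c z = c x := by
            by_contra hcz
            have h1 : dist x y < dist x z := hsep x y x z hy.symm (fun h => hcz h.symm)
            have h2 : dist x z ≤ dist x y := hmin y hpy
            linarith
          have hsub : (Finset.univ.filter (fun w => p z < p w)) ⊂
              (Finset.univ.filter (fun w => p x < p w)) := by
            constructor
            · intro w hw
              simp only [Finset.mem_filter] at *
              exact ⟨hw.1, hpz.trans hw.2⟩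
            · intro h
              have := h (by simp [hpz] : z ∈ Finset.univ.filter (fun w => p x < p w))
              simp at this
          have : (Finset.univ.filter (fun w => p z < p w)).card <
              (Finset.univ.filter (fun w => p x < p w)).card :=
            Finset.card_lt_card hsub
          have := ih z (by omega)
          rw [hYz, this, hcz]
  intro x
  exact key _ x le_rfl
end

section
/- Let X = ⋃_{k=1}^K X_k be a finite dataset with classes as above, p : X → (0,∞) injective, D_t a metric with D_t^in < D_t^btw. For any point x ∈ X_k that is not the density maximizer of X_k, the D_t-nearest point to x among points of strictly higher density lies in the same class X_k. -/
/-- The nearest (in diffusion distance) strictly-higher-density point to a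
non-classwise-maximizer lies in the same class, when within-class distances
are strictly smaller than between-class distances. -/
theorem nearest_higher_density_same_class {X : Type*} [Fintype X] [MetricSpace X] {K : ℕ}
    (c : X → Fin K)
    (p : X → ℝ) (hpos : ∀ x, 0 < p x) (hp : Function.Injective p)
    (hsep : ∀ x y x' y', c x = c y → c x' ≠ c y' → dist x y < dist x' y')
    (x z : X)
    (hx : ∃ y, c y = c x ∧ p x < p y)
    (hz : p x < p z)
    (hzmin : ∀ z', p x < p z' → dist x z ≤ dist x z') :
    c z = c x := by
  obtain ⟨y, hcy, hpy⟩ := hx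
  by_contra hne
  have h1 := hsep x y x z hcy.symm (fun h => hne h.symm)
  exact absurd (hzmin y hpy) (not_le.mpr h1)
end

section
/- Under the geometric data model with D_t^in < D_t^btw and injective p: for every classwise density maximizer m ∈ ℳ that is not the global density maximizer of X, ρ_t(m) ≥ D_t^btw > D_t^in. Consequently ρ_t separates classwise maximizers from non-maximizers: min_{m ∈ ℳ} ρ_t(m) > max_{x ∉ ℳ} ρ_t(x). -/
open scoped Classical

/-- `ρ_t(x)`: the distance from `x` to its nearest neighbor of at least as high
density, except at the global density maximizer `xs`, where it is the maximal
distance from `xs` to any point. -/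
noncomputable def rho {X : Type*} [Fintype X] [Nonempty X] [MetricSpace X]
    (p : X → ℝ) (xs x : X) : ℝ :=
  if h : (Finset.univ.filter fun y => p x ≤ p y ∧ y ≠ x).Nonempty ∧ x ≠ xs then
    (Finset.univ.filter fun y => p x ≤ p y ∧ y ≠ x).inf' h.1 (dist x)
  else
    Finset.univ.sup' Finset.univ_nonempty (dist x)

/-- Under the geometric data model with `D_t^in < D_t^btw` and `K ≥ 2` nonempty
classes, every classwise density maximizer `m` satisfies `ρ_t(m) ≥ D_t^btw`, and
`ρ_t` strictly separates classwise maximizers from non-maximizers. -/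
theorem rho_separates_classwise_maximizers {X : Type*} [Fintype X] [Nonempty X]
    [MetricSpace X] {K : ℕ} (hK : 2 ≤ K)
    (c : X → Fin K) (hsurj : ∀ k : Fin K, ∃ x, c x = k)
    (p : X → ℝ) (hpos : ∀ x, 0 < p x) (hp : Function.Injective p)
    (Din Dbtw : ℝ)
    (hDin : ∀ x y, c x = c y → dist x y ≤ Din)
    (hDbtw : ∀ x y, c x ≠ c y → Dbtw ≤ dist x y)
    (hlt : Din < Dbtw)
    (xs : X) (hxs : ∀ y, p y ≤ p xs) :
    (∀ m, (∀ y, c y = c m → p y ≤ p m) → Dbtw ≤ rho p xs m) ∧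
      (∀ m x, (∀ y, c y = c m → p y ≤ p m) → ¬(∀ y, c y = c x → p y ≤ p x) →
        rho p xs x < rho p xs m) := by
  classical
  have key1 : ∀ m, (∀ y, c y = c m → p y ≤ p m) → Dbtw ≤ rho p xs m := by
    intro m hm
    by_cases hmx : m = xs
    · rw [rho, dif_neg (by simp [hmx])]
      haveI : Nontrivial (Fin K) := Fin.nontrivial_iff_two_le.mpr hK
      obtain ⟨k, hk⟩ := exists_ne (c m)
      obtain ⟨y, hy⟩ := hsurj k
      have h1 : Dbtw ≤ dist m y := hDbtw m y (by rw [hy]; exact hk.symm)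
      exact h1.trans (Finset.le_sup' (dist m) (Finset.mem_univ y))
    · have hne : ((Finset.univ.filter fun y => p m ≤ p y ∧ y ≠ m)).Nonempty :=
        ⟨xs, by simp [hxs m, Ne.symm hmx]⟩
      rw [rho, dif_pos ⟨hne, hmx⟩]
      apply Finset.le_inf'
      intro y hy
      simp only [Finset.mem_filter, Finset.mem_univ, true_and] at hy
      have hcy : c m ≠ c y := by
        intro hcc
        have := hm y hcc.symm
        exact hy.2 (hp (le_antisymm this hy.1))
      exact hDbtw m y hcy
  refine ⟨key1, fun m x hm hx => ?_⟩
  push_neg at hx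
  obtain ⟨y, hcy, hpy⟩ := hx
  have hpy' : p x < p y := hpy
  have hxxs : x ≠ xs := by
    intro h; subst h; exact absurd (hxs y) (not_le_of_gt hpy')
  have hyx : y ≠ x := fun h => by subst h; exact lt_irrefl _ hpy'
  have hne : ((Finset.univ.filter fun z => p x ≤ p z ∧ z ≠ x)).Nonempty :=
    ⟨y, by simp [hpy'.le, hyx]⟩
  have hrx : rho p xs x ≤ Din := by
    rw [rho, dif_pos ⟨hne, hxxs⟩]
    have : dist x y ≤ Din := hDin x y hcy.symm
    exact le_trans (Finset.inf'_le (dist x) (by simp [hpy'.le, hyx])) this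
  exact lt_of_le_of_lt hrx (lt_of_lt_of_le hlt (key1 m hm))
end

section
/- Under the geometric data model with D_t^in < D_t^btw, injective p, and the additional assumption that min_{m∈ℳ} p(m) · D_t^btw > max_{x∈X} p(x) · D_t^in: the K largest values of 𝒟_t(x) = p(x)ρ_t(x) are attained exactly at the K classwise density maximizers ℳ. -/
open scoped Classical

/-- Under the geometric data model with `D_t^in < D_t^btw` and the additional
assumption `min_{m∈ℳ} p(m) · D_t^btw > max_x p(x) · D_t^in`, the `K` largest
values of `𝒟_t(x) = p(x) ρ_t(x)` are attained exactly at the `K` classwise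
density maximizers: there are exactly `K` of them, and `𝒟_t` is strictly larger
on them than anywhere else. -/
theorem top_K_Dt_are_classwise_maximizers {X : Type*} [Fintype X] [Nonempty X]
    [MetricSpace X] {K : ℕ} (hK : 2 ≤ K)
    (c : X → Fin K) (hsurj : ∀ k : Fin K, ∃ x, c x = k)
    (p : X → ℝ) (hpos : ∀ x, 0 < p x) (hp : Function.Injective p)
    (Din Dbtw : ℝ)
    (hDin : ∀ x y, c x = c y → dist x y ≤ Din)
    (hDbtw : ∀ x y, c x ≠ c y → Dbtw ≤ dist x y)
    (hlt : Din < Dbtw)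
    (hextra : ∀ m x, (∀ y, c y = c m → p y ≤ p m) → p x * Din < p m * Dbtw)
    (xs : X) (hxs : ∀ y, p y ≤ p xs) :
    (Finset.univ.filter fun m : X => ∀ y, c y = c m → p y ≤ p m).card = K ∧
      (∀ m x, (∀ y, c y = c m → p y ≤ p m) → ¬(∀ y, c y = c x → p y ≤ p x) →
        p x * rho p xs x < p m * rho p xs m) := by
  classical
  -- every class has a maximizer
  have hmaxex : ∀ k : Fin K, ∃ m, c m = k ∧ ∀ y, c y = c m → p y ≤ p m := by
    intro k
    obtain ⟨x0, hx0⟩ := hsurj k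
    obtain ⟨m, hm, hmax⟩ :=
      (Finset.univ.filter fun x => c x = k).exists_max_image p
        ⟨x0, by simp [hx0]⟩
    simp only [Finset.mem_filter, Finset.mem_univ, true_and] at hm
    exact ⟨m, hm, fun y hy => hmax y (by simp [hy, hm])⟩
  constructor
  · have : (Finset.univ.filter fun m : X => ∀ y, c y = c m → p y ≤ p m).card =
        (Finset.univ : Finset (Fin K)).card := by
      apply Finset.card_bij (fun m _ => c m)
      · intros; exact Finset.mem_univ _
      · intro a ha b hb hab
        simp only [Finset.mem_filter, Finset.mem_univ, true_and] at ha hb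
        have h1 := ha b (by rw [hab])
        have h2 := hb a hab
        exact hp (le_antisymm h2 h1)
      · intro k _
        obtain ⟨m, hm1, hm2⟩ := hmaxex k
        exact ⟨m, by simpa using hm2, hm1⟩
    simpa using this
  · intro m x hm hx
    -- x is not xs
    have hxne : x ≠ xs := by
      intro h
      exact hx (h ▸ fun y _ => hxs y)
    -- lower bound on rho m
    have hrm : Dbtw ≤ rho p xs m := by
      unfold rho
      split_ifs with h
      · apply Finset.le_inf'
        intro y hy
        simp only [Finset.mem_filter, Finset.mem_univ, true_and] at hy
        have hcy : c y ≠ c m := by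
          intro hc
          exact hy.2 (hp (le_antisymm (hm y hc) hy.1))
        exact hDbtw m y (fun hc => hcy hc.symm)
      · -- pick a point in another class
        have : ∃ k : Fin K, k ≠ c m := by
          by_cases h0 : c m = ⟨0, by omega⟩
          · refine ⟨⟨1, by omega⟩, ?_⟩
            rw [h0]
            intro h
            simpa using congrArg Fin.val h
          · exact ⟨⟨0, by omega⟩, fun h => h0 h.symm⟩
        obtain ⟨k, hk⟩ := this
        obtain ⟨z, hz⟩ := hsurj k
        calc Dbtw ≤ dist m z := hDbtw m z (by rw [hz]; exact fun h => hk h.symm)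
          _ ≤ _ := Finset.le_sup' (dist m) (Finset.mem_univ z)
    -- upper bound on rho x
    have hrx : rho p xs x ≤ Din := by
      push_neg at hx
      obtain ⟨y, hy1, hy2⟩ := hx
      have hyx : y ≠ x := fun h => lt_irrefl _ (h ▸ hy2)
      have hxy : p x ≤ p y := le_of_lt hy2
      have hne : (Finset.univ.filter fun z => p x ≤ p z ∧ z ≠ x).Nonempty :=
        ⟨y, by simp [hxy, hyx]⟩
      unfold rho
      rw [dif_pos ⟨hne, hxne⟩]
      calc (Finset.univ.filter fun z => p x ≤ p z ∧ z ≠ x).inf' hne (dist x)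
          ≤ dist x y := Finset.inf'_le _ (by simp [hxy, hyx])
        _ ≤ Din := hDin x y hy1.symm
    calc p x * rho p xs x ≤ p x * Din :=
          mul_le_mul_of_nonneg_left hrx (le_of_lt (hpos x))
      _ < p m * Dbtw := hextra m x hm
      _ ≤ p m * rho p xs m := mul_le_mul_of_nonneg_left hrm (le_of_lt (hpos m))
end
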